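/- arXiv:0908.2228 — 3 statements merged into one kernel-verified Lean document; each statement's English description precedes it below -/
import Mathlib

section
/- For any towers (X_n)_{n∈ω} and (Y_n)_{n∈ω} of uniform spaces, the identity map u-lim (X_n × Y_n) → (u-lim X_n) × (u-lim Y_n) is a homeomorphism, where each X_n × Y_n carries the product uniformity and the right-hand side carries the product topology. -/
/-!
The product of the two limit uniformities is admissible for the product tower, so the limit
topology of the product tower is finer than the product topology.

Conversely, an entourage of the limit of the product tower belongs to a single admissible
uniformity and hence contains the unit ball of a uniform pseudometric `ρ` on `X × Y`. Around
`(x₀, y₀)`, measure `X_n` by `sup_{y ∈ Y_n ∪ {y₀}} min (ρ ((x, y), (x', y))) 1`, and `Y_n`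
symmetrically. These pseudometrics are uniform and increasing, so their chain limits `lim d_n` are
uniform for `u-lim X_n` and `u-lim Y_n`. Suppose `x` is `1/2`-close to `x₀` and `y` to `y₀` in
these limits. Interleave the two chains, always moving the coordinate of smaller height; then the
fixed coordinate lies in a slice over which the supremum was taken. This joins `(x, y)` to
`(x₀, y₀)` by a path of `ρ`-length less than `1`.
-/

open Set Filter Topology

universe u

/-- A tower of uniform spaces on the ambient set `X`: an increasing sequence
`S 0 ⊆ S 1 ⊆ ⋯` of subsets covering `X`, each `S n` carrying a uniformity which is
the subspace uniformity inherited from `S (n+1)`. -/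
structure UniformTower (X : Type u) where
  S : ℕ → Set X
  mono : Monotone S
  iUnion_eq : ⋃ n, S n = Set.univ
  u : (n : ℕ) → UniformSpace (S n)
  compat : ∀ n, u n = UniformSpace.comap (Set.inclusion (mono (Nat.le_succ n))) (u (n + 1))

namespace UniformTower

variable {X : Type u} (T : UniformTower X)

/-- The uniform direct limit: the strongest (finest) uniformity on `X` making all
the identity inclusions `S n → X` uniformly continuous. -/
noncomputable def dirLim : UniformSpace X :=
  sInf {u' : UniformSpace X |
    ∀ n, @UniformContinuous _ _ (T.u n) u' (Subtype.val : T.S n → X)}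

/-- The height `|x| = min {n : x ∈ S n}` of a point of `X`. -/
noncomputable def height (x : X) : ℕ := sInf {n | x ∈ T.S n}

lemma mem_S_height (x : X) : x ∈ T.S (T.height x) := by
  have hx : x ∈ ⋃ n, T.S n := T.iUnion_eq ▸ Set.mem_univ x
  rcases Set.mem_iUnion.mp hx with ⟨n, hn⟩
  exact Nat.sInf_mem ⟨n, show n ∈ {m | x ∈ T.S m} from hn⟩

/-- Given a sequence of pseudometrics `d n` on the stages `S n`, the distance
`d_{|x,y|}(x,y)` where `|x,y| = max (|x|, |y|)`. -/
noncomputable def chainD (d : (n : ℕ) → T.S n → T.S n → ℝ) (x y : X) : ℝ :=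
  d (max (T.height x) (T.height y))
    ⟨x, T.mono (le_max_left _ _) (T.mem_S_height x)⟩
    ⟨y, T.mono (le_max_right _ _) (T.mem_S_height y)⟩

/-- The limit pseudometric `lim d_n` of a sequence of pseudometrics:
`lim d_n (x,y) = inf { Σ_{i=1}^m d_{|x_{i-1},x_i|}(x_{i-1},x_i) : x = x_0, x_1, …, x_m = y }`. -/
noncomputable def limD (d : (n : ℕ) → T.S n → T.S n → ℝ) (x y : X) : ℝ :=
  sInf {r : ℝ | ∃ (m : ℕ) (c : ℕ → X), c 0 = x ∧ c m = y ∧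
    r = ∑ i ∈ Finset.range m, T.chainD d (c i) (c (i + 1))}

/-- A sequence of pseudometrics on the stages of the tower is monotone if
`d n ≤ d (n+1)` on `S n × S n`. -/
def MonotoneSeq (d : (n : ℕ) → T.S n → T.S n → ℝ) : Prop :=
  ∀ n (x y : T.S n),
    d n x y ≤ d (n + 1) (Set.inclusion (T.mono (Nat.le_succ n)) x)
      (Set.inclusion (T.mono (Nat.le_succ n)) y)

end UniformTower

/-- `d` is a pseudometric: it vanishes on the diagonal, is symmetric and satisfies
the triangle inequality. -/
def IsPseudometric {α : Type*} (d : α → α → ℝ) : Prop :=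
  (∀ x, d x x = 0) ∧ (∀ x y, d x y = d y x) ∧ (∀ x y z, d x z ≤ d x y + d y z)

/-- `d` is a uniform pseudometric on the uniform space `(α, u)`:
for every `ε > 0` the set `{d < ε}` is an entourage. -/
def IsUniformPseudometric {α : Type*} (u : UniformSpace α) (d : α → α → ℝ) : Prop :=
  IsPseudometric d ∧ ∀ ε : ℝ, 0 < ε → {p : α × α | d p.1 p.2 < ε} ∈ @uniformity α u

open scoped Uniformity SetRel

lemma IsPseudometric.nonneg {α : Type*} {d : α → α → ℝ} (h : IsPseudometric d) (x y : α) :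
    0 ≤ d x y := by
  have := h.2.2 x y x
  rw [h.1, h.2.1 y x] at this
  linarith

lemma min_one_le_add {a b c : ℝ} (hb : 0 ≤ b) (hc : 0 ≤ c) (h : a ≤ b + c) :
    min a 1 ≤ min b 1 + min c 1 := by
  simp only [min_def]
  split_ifs <;> linarith

lemma exists_symm_comp_seq {α : Type*} [UniformSpace α] {E : SetRel α α} (hE : E ∈ 𝓤 α) :
    ∃ V : ℕ → SetRel α α, (∀ n, V n ∈ 𝓤 α) ∧ (∀ n, (V n).IsSymm) ∧ V 0 ⊆ E ∧
      ∀ n, V (n + 1) ○ V (n + 1) ⊆ V n := by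
  choose! F hF hFsymm hFcomp using fun s (hs : s ∈ 𝓤 α) => comp_symm_mem_uniformity_sets hs
  have hmem : ∀ n, F^[n] E ∈ 𝓤 α := fun n => by
    induction n with
    | zero => exact hE
    | succ n ih => rw [Function.iterate_succ_apply']; exact hF _ ih
  refine ⟨fun n => F (F^[n] E), fun n => hF _ (hmem n), fun n => hFsymm _ (hmem n),
    (subset_comp_self_of_mem_uniformity (hF E hE)).trans (hFcomp E hE), fun n => ?_⟩
  simp only [Function.iterate_succ_apply']
  exact hFcomp _ (hF _ (hmem n))

lemma exists_isUniformPseudometric_subset {α : Type*} (u : UniformSpace α) {E : SetRel α α}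
    (hE : E ∈ 𝓤[u]) :
    ∃ ρ : α → α → ℝ, IsUniformPseudometric u ρ ∧ {p : α × α | ρ p.1 p.2 < 1} ⊆ E := by
  obtain ⟨V, hV, hVsymm, hV0, hVcomp⟩ := exists_symm_comp_seq hE
  have hanti : Antitone V := antitone_nat_of_succ_le fun n =>
    (subset_comp_self_of_mem_uniformity (hV (n + 1))).trans (hVcomp n)
  have hbasis := (HasAntitoneBasis.iInf_principal hanti).1
  -- the countably generated uniformity with basis `V n` is metrizable
  let v : UniformSpace α := .ofCore <| .mk' (⨅ n, 𝓟 (V n))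
    (fun r hr x => let ⟨n, _, hn⟩ := hbasis.mem_iff.1 hr; hn (refl_mem_uniformity (hV n)))
    (fun r hr => let ⟨n, _, hn⟩ := hbasis.mem_iff.1 hr
      mem_of_superset (hbasis.mem_of_mem trivial) fun p hp => hn ((hVsymm n).symm _ _ hp))
    (fun r hr => let ⟨n, _, hn⟩ := hbasis.mem_iff.1 hr
      ⟨V (n + 1), hbasis.mem_of_mem trivial, (hVcomp n).trans hn⟩)
  have hvu : 𝓤[u] ≤ 𝓤[v] := le_iInf fun n => le_principal_iff.2 (hV n)
  have : IsCountablyGenerated 𝓤[v] := hbasis.isCountablyGenerated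
  let _ : PseudoMetricSpace α := @UniformSpace.pseudoMetricSpace α v _
  obtain ⟨ε, hε, hball⟩ := Metric.mem_uniformity_dist.1
    (show V 0 ∈ 𝓤 α from hbasis.mem_of_mem (i := 0) trivial)
  refine ⟨fun x y => dist x y / ε, ⟨⟨fun x => by simp, fun x y => by simp only [dist_comm],
    fun x y z => by simp only [← add_div]; gcongr; exact dist_triangle x y z⟩, fun δ hδ => ?_⟩,
    fun p hp => hV0 (hball ((div_lt_one hε).1 hp))⟩
  simp only [div_lt_iff₀ hε]
  exact hvu (Metric.dist_mem_uniformity (mul_pos hδ hε))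

namespace UniformTower

variable {X : Type u} (T : UniformTower X)

lemma mem_S_of_height_le {x : X} {n : ℕ} (h : T.height x ≤ n) : x ∈ T.S n :=
  T.mono h (T.mem_S_height x)

lemma height_le_of_mem_S {x : X} {n : ℕ} (h : x ∈ T.S n) : T.height x ≤ n := Nat.sInf_le h

lemma uniformContinuous_inclusion {m n : ℕ} (h : m ≤ n) :
    UniformContinuous[T.u m, T.u n] (Set.inclusion (T.mono h)) := by
  induction n, h using Nat.le_induction with
  | base => exact @uniformContinuous_id _ (T.u m)
  | succ n _ ih =>
    have hstep : UniformContinuous[T.u n, T.u (n + 1)] (Set.inclusion (T.mono n.le_succ)) := by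
      rw [T.compat n]
      exact @uniformContinuous_comap _ _ _ (T.u (n + 1))
    exact @UniformContinuous.comp _ _ _ (T.u m) (T.u n) (T.u (n + 1)) _ _ hstep ih

def Admissible (v : UniformSpace X) : Prop :=
  ∀ n, UniformContinuous[T.u n, v] (Subtype.val : T.S n → X)

lemma dirLim_le {v : UniformSpace X} (hv : T.Admissible v) : T.dirLim ≤ v := sInf_le hv

lemma admissible_dirLim : T.Admissible T.dirLim := fun n =>
  uniformContinuous_sInf_rng.2 fun _ hv => hv n

lemma exists_admissible_of_mem_uniformity {E : SetRel X X} (hE : E ∈ 𝓤[T.dirLim]) :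
    ∃ v, T.Admissible v ∧ E ∈ 𝓤[v] := by
  have hdir : Directed (· ≥ ·) fun v : {v // T.Admissible v} => 𝓤[v.1] := fun v w =>
    ⟨⟨v.1 ⊓ w.1, fun n => (v.2 n).inf_rng (w.2 n)⟩, inf_le_left, inf_le_right⟩
  have : Nonempty {v // T.Admissible v} := ⟨⟨⊤, fun _ => le_top⟩⟩
  rw [dirLim, sInf_eq_iInf', iInf_uniformity] at hE
  obtain ⟨v, hv⟩ := (mem_iInf_of_directed hdir E).1 hE
  exact ⟨v.1, v.2, hv⟩

variable {T} {d : (n : ℕ) → T.S n → T.S n → ℝ}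

lemma MonotoneSeq.le (hd : T.MonotoneSeq d) {m n : ℕ} (h : m ≤ n) (x y : T.S m) :
    d m x y ≤ d n (Set.inclusion (T.mono h) x) (Set.inclusion (T.mono h) y) := by
  induction n, h using Nat.le_induction with
  | base => exact le_rfl
  | succ n _ ih => exact ih.trans (hd n _ _)

lemma chainD_le (hd : T.MonotoneSeq d) {n : ℕ} {x y : X} (hx : x ∈ T.S n) (hy : y ∈ T.S n) :
    T.chainD d x y ≤ d n ⟨x, hx⟩ ⟨y, hy⟩ :=
  hd.le (max_le (T.height_le_of_mem_S hx) (T.height_le_of_mem_S hy)) _ _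

lemma chainD_nonneg (hp : ∀ n, IsPseudometric (d n)) (x y : X) : 0 ≤ T.chainD d x y :=
  (hp _).nonneg _ _

lemma chainD_comm (hp : ∀ n, IsPseudometric (d n)) (x y : X) :
    T.chainD d x y = T.chainD d y x := by
  have reindex : ∀ {k k' : ℕ} (h : k = k') (hx : x ∈ T.S k) (hy : y ∈ T.S k),
      d k ⟨y, hy⟩ ⟨x, hx⟩ = d k' ⟨y, h ▸ hy⟩ ⟨x, h ▸ hx⟩ := by
    rintro _ _ rfl _ _; rfl
  rw [chainD, (hp _).2.1]
  exact reindex (max_comm _ _) _ _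

lemma limD_le_sum (hp : ∀ n, IsPseudometric (d n)) {c : ℕ → X} {m : ℕ} :
    T.limD d (c 0) (c m) ≤ ∑ i ∈ Finset.range m, T.chainD d (c i) (c (i + 1)) :=
  csInf_le ⟨0, fun _ ⟨_, _, _, _, hr⟩ => hr ▸ Finset.sum_nonneg fun _ _ => chainD_nonneg hp _ _⟩
    ⟨m, c, rfl, rfl, rfl⟩

lemma chainD_le_sum (hp : ∀ n, IsPseudometric (d n)) {c : ℕ → X} {m i : ℕ} (hi : i < m) :
    T.chainD d (c i) (c (i + 1)) ≤ ∑ j ∈ Finset.range m, T.chainD d (c j) (c (j + 1)) :=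
  Finset.single_le_sum (f := fun j => T.chainD d (c j) (c (j + 1)))
    (fun _ _ => chainD_nonneg hp _ _) (Finset.mem_range.2 hi)

lemma limD_le_chainD (hp : ∀ n, IsPseudometric (d n)) (x y : X) :
    T.limD d x y ≤ T.chainD d x y := by
  simpa using limD_le_sum (T := T) hp (c := fun i => if i = 0 then x else y) (m := 1)

lemma le_limD {x y : X} {r : ℝ}
    (h : ∀ (m : ℕ) (c : ℕ → X), c 0 = x → c m = y →
      r ≤ ∑ i ∈ Finset.range m, T.chainD d (c i) (c (i + 1))) :
    r ≤ T.limD d x y :=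
  le_csInf ⟨_, 1, fun i => if i = 0 then x else y, rfl, rfl, rfl⟩
    fun _ ⟨m, c, h0, hm, hr⟩ => hr ▸ h m c h0 hm

lemma exists_sum_lt_of_limD_lt {x y : X} {r : ℝ} (h : T.limD d x y < r) :
    ∃ (m : ℕ) (c : ℕ → X), c 0 = x ∧ c m = y ∧
      ∑ i ∈ Finset.range m, T.chainD d (c i) (c (i + 1)) < r := by
  by_contra! H
  exact h.not_ge (le_limD fun m c h0 hm => H m c h0 hm)

lemma limD_self (hp : ∀ n, IsPseudometric (d n)) (x : X) : T.limD d x x = 0 :=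
  le_antisymm (by simpa using limD_le_sum (T := T) hp (c := fun _ => x) (m := 0))
    (le_limD fun _ _ _ _ => Finset.sum_nonneg fun _ _ => chainD_nonneg hp _ _)

lemma limD_comm (hp : ∀ n, IsPseudometric (d n)) (x y : X) :
    T.limD d x y = T.limD d y x := by
  suffices h : ∀ x y, T.limD d y x ≤ T.limD d x y from le_antisymm (h y x) (h x y)
  refine fun x y => le_limD fun m c h0 hm => ?_
  have hrev := limD_le_sum (T := T) hp (c := fun i => c (m - i)) (m := m)
  simp only [Nat.sub_zero, Nat.sub_self, hm, h0] at hrev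
  refine hrev.trans_eq ?_
  rw [← Finset.sum_range_reflect]
  refine Finset.sum_congr rfl fun i hi => ?_
  have := Finset.mem_range.1 hi
  rw [chainD_comm hp]
  congr 2 <;> omega

lemma exists_chain_append {c₁ c₂ : ℕ → X} {m₁ : ℕ} (h : c₁ m₁ = c₂ 0) (m₂ : ℕ) :
    ∃ c : ℕ → X, c 0 = c₁ 0 ∧ c (m₁ + m₂) = c₂ m₂ ∧
      ∑ i ∈ Finset.range (m₁ + m₂), T.chainD d (c i) (c (i + 1)) =
        ∑ i ∈ Finset.range m₁, T.chainD d (c₁ i) (c₁ (i + 1)) +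
          ∑ i ∈ Finset.range m₂, T.chainD d (c₂ i) (c₂ (i + 1)) := by
  set c : ℕ → X := fun i => if i ≤ m₁ then c₁ i else c₂ (i - m₁)
  have hright : ∀ i, c (m₁ + i) = c₂ i := fun i => by
    rcases i.eq_zero_or_pos with rfl | hi
    · simp [c, h]
    · simp [c, show ¬ m₁ + i ≤ m₁ by omega]
  refine ⟨c, by simp [c], hright m₂, ?_⟩
  rw [Finset.sum_range_add]
  congr 1
  · refine Finset.sum_congr rfl fun i hi => ?_
    have := Finset.mem_range.1 hi
    simp [c, show i ≤ m₁ by omega, show i + 1 ≤ m₁ by omega]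
  · exact Finset.sum_congr rfl fun i _ => by rw [hright, ← hright (i + 1)]; rfl

lemma limD_triangle (hp : ∀ n, IsPseudometric (d n)) (x y z : X) :
    T.limD d x z ≤ T.limD d x y + T.limD d y z := by
  refine le_of_forall_pos_lt_add fun ε hε => ?_
  obtain ⟨m₁, c₁, rfl, h₁m, hsum₁⟩ :=
    exists_sum_lt_of_limD_lt (lt_add_of_pos_right (T.limD d x y) (half_pos hε))
  obtain ⟨m₂, c₂, h₂0, h₂m, hsum₂⟩ :=
    exists_sum_lt_of_limD_lt (lt_add_of_pos_right (T.limD d y z) (half_pos hε))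
  obtain ⟨c, h0, hm, hsum⟩ := exists_chain_append (T := T) (d := d) (h₁m.trans h₂0.symm) m₂
  have hle := limD_le_sum (T := T) hp (c := c) (m := m₁ + m₂)
  rw [h0, hm, h₂m, hsum] at hle
  linarith

lemma isPseudometric_limD (hp : ∀ n, IsPseudometric (d n)) : IsPseudometric (T.limD d) :=
  ⟨limD_self hp, limD_comm hp, limD_triangle hp⟩

lemma limD_le (hp : ∀ n, IsPseudometric (d n)) (hd : T.MonotoneSeq d) {n : ℕ} (x y : T.S n) :
    T.limD d x y ≤ d n x y :=
  (limD_le_chainD hp _ _).trans (chainD_le hd x.2 y.2)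

lemma setOf_limD_lt_mem_uniformity (hd : ∀ n, IsUniformPseudometric (T.u n) (d n))
    (hmono : T.MonotoneSeq d) {ε : ℝ} (hε : 0 < ε) :
    {p : X × X | T.limD d p.1 p.2 < ε} ∈ 𝓤[T.dirLim] := by
  have hp n := (hd n).1
  have hlim := isPseudometric_limD (T := T) hp
  have hbasis := UniformSpace.hasBasis_ofFun ⟨1, one_pos⟩ (T.limD d) hlim.1 hlim.2.1 hlim.2.2
    UniformSpace.ofDist_aux
  have hadm : T.Admissible (.ofFun (T.limD d) hlim.1 hlim.2.1 hlim.2.2 UniformSpace.ofDist_aux) :=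
    fun n => hbasis.tendsto_right_iff.2 fun δ hδ =>
      mem_of_superset ((hd n).2 δ hδ) fun p hp' => (limD_le hp hmono p.1 p.2).trans_lt hp'
  exact T.dirLim_le hadm (hbasis.mem_of_mem hε)

end UniformTower

lemma UniformContinuous.uniformEquicontinuous_slices {α β γ : Type*} [UniformSpace α]
    [UniformSpace β] [UniformSpace γ] {f : α × β → γ} (hf : UniformContinuous f) :
    UniformEquicontinuous fun (b : β) (a : α) => f (a, b) := by
  intro U hU
  have hpre := hf hU
  rw [uniformity_prod_eq_prod] at hpre
  obtain ⟨t₁, ht₁, t₂, ht₂, hsub⟩ := mem_prod_iff.1 (mem_map.1 hpre)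
  filter_upwards [ht₁] with p hp b using
    hsub (show (p, (b, b)) ∈ t₁ ×ˢ t₂ from ⟨hp, refl_mem_uniformity ht₂⟩)

theorem IsPseudometric.le_sum_of_chains {X Y ι : Type*} [LinearOrder ι]
    {ρ : X × Y → X × Y → ℝ} (hρ : IsPseudometric ρ) (hx : X → ι) (hy : Y → ι)
    (a : ℕ → X) (b : ℕ → Y) (CX CY : ℕ → ℝ) (m l : ℕ)
    (hX : ∀ i < m, ∀ y, hy y ≤ hx (a i) ∨ y = b l → ρ (a i, y) (a (i + 1), y) ≤ CX i)
    (hY : ∀ j < l, ∀ x, hx x ≤ hy (b j) ∨ x = a m → ρ (x, b j) (x, b (j + 1)) ≤ CY j) :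
    ρ (a 0, b 0) (a m, b l) ≤ ∑ i ∈ Finset.range m, CX i + ∑ j ∈ Finset.range l, CY j := by
  by_cases hmove : m ≠ 0 ∧ (l = 0 ∨ hy (b 0) ≤ hx (a 0))
  · obtain ⟨m, rfl⟩ := Nat.exists_eq_succ_of_ne_zero hmove.1
    have hstep := hX 0 m.succ_pos (b 0) (hmove.2.symm.imp_right fun hl => by rw [hl])
    have hrest := hρ.le_sum_of_chains hx hy (fun i => a (i + 1)) b (fun i => CX (i + 1)) CY m l
      (fun i hi => hX (i + 1) (by omega)) hY
    rw [Finset.sum_range_succ']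
    linarith [hρ.2.2 (a 0, b 0) (a 1, b 0) (a (m + 1), b l)]
  · rcases Nat.eq_zero_or_pos l with rfl | hl
    · obtain rfl : m = 0 := by tauto
      simp [hρ.1]
    · obtain ⟨l, rfl⟩ := Nat.exists_eq_add_one_of_ne_zero hl.ne'
      have hpartner : hx (a 0) ≤ hy (b 0) ∨ a 0 = a m := by
        rcases Nat.eq_zero_or_pos m with rfl | hm
        · exact Or.inr rfl
        · exact Or.inl (not_le.1 fun h => hmove ⟨hm.ne', Or.inr h⟩).le
      have hstep := hY 0 l.succ_pos (a 0) hpartner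
      have hrest := hρ.le_sum_of_chains hx hy a (fun j => b (j + 1)) CX (fun j => CY (j + 1)) m l
        hX (fun j hj => hY (j + 1) (by omega))
      rw [Finset.sum_range_succ' CY]
      linarith [hρ.2.2 (a 0, b 0) (a 0, b 1) (a m, b (l + 1))]
termination_by m + l

namespace UniformTower

variable {A B : Type u} {W : Type*} (TA : UniformTower A) (TB : UniformTower B)

/-- Truncating at `1` keeps the supremum finite. The base point `b₀` is included because once the
chain in `B` has reached `b₀`, every remaining step in `A` takes `b₀` as partner, whatever its
height. -/
noncomputable def sliceDist (ρ : W → W → ℝ) (g : A → B → W) (b₀ : B) (n : ℕ) (a a' : TA.S n) :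
    ℝ :=
  ⨆ b : (insert b₀ (TB.S n) : Set B), min (ρ (g a b) (g a' b)) 1

variable {TA TB} {ρ : W → W → ℝ} {g : A → B → W} {b₀ : B}

lemma min_le_sliceDist {n : ℕ} (a a' : TA.S n) {b : B} (hb : b ∈ insert b₀ (TB.S n)) :
    min (ρ (g a b) (g a' b)) 1 ≤ TA.sliceDist TB ρ g b₀ n a a' :=
  le_ciSup (f := fun b : (insert b₀ (TB.S n) : Set B) => min (ρ (g a b) (g a' b)) 1)
    ⟨1, by rintro _ ⟨b, rfl⟩; exact min_le_right _ _⟩ ⟨b, hb⟩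

lemma sliceDist_le {n : ℕ} {a a' : TA.S n} {r : ℝ}
    (h : ∀ b ∈ insert b₀ (TB.S n), min (ρ (g a b) (g a' b)) 1 ≤ r) :
    TA.sliceDist TB ρ g b₀ n a a' ≤ r :=
  ciSup_le fun b => h b b.2

lemma isPseudometric_sliceDist (hρ : IsPseudometric ρ) (n : ℕ) :
    IsPseudometric (TA.sliceDist TB ρ g b₀ n) := by
  refine ⟨fun a => le_antisymm (sliceDist_le fun b _ => by simp [hρ.1]) ?_,
    fun a a' => by simp only [sliceDist, hρ.2.1], fun a a' a'' => sliceDist_le fun b hb => ?_⟩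
  · exact (le_min (hρ.nonneg _ _) zero_le_one).trans (min_le_sliceDist a a (mem_insert b₀ _))
  · exact (min_one_le_add (hρ.nonneg _ _) (hρ.nonneg _ _) (hρ.2.2 _ _ _)).trans
      (add_le_add (min_le_sliceDist _ _ hb) (min_le_sliceDist _ _ hb))

lemma monotoneSeq_sliceDist : TA.MonotoneSeq (TA.sliceDist TB ρ g b₀) := fun n a a' =>
  sliceDist_le fun _ hb => min_le_sliceDist (inclusion (TA.mono n.le_succ) a)
    (inclusion (TA.mono n.le_succ) a') (insert_subset_insert (TB.mono n.le_succ) hb)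

lemma isUniformPseudometric_sliceDist {uW : UniformSpace W} (hρ : IsUniformPseudometric uW ρ)
    (hg : ∀ n m, UniformContinuous[@instUniformSpaceProd _ _ (TA.u n) (TB.u m), uW]
      fun p : TA.S n × TB.S m => g p.1 p.2) (n : ℕ) :
    IsUniformPseudometric (TA.u n) (TA.sliceDist TB ρ g b₀ n) := by
  refine ⟨isPseudometric_sliceDist hρ.1 n, fun ε hε => ?_⟩
  let m := max n (TB.height b₀)
  have hsub : insert b₀ (TB.S n) ⊆ TB.S m :=
    insert_subset (TB.mem_S_of_height_le (le_max_right _ _)) (TB.mono (le_max_left _ _))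
  have hequi := @UniformContinuous.uniformEquicontinuous_slices _ _ _ (TA.u n) (TB.u m) uW _
    (hg n m) _ (hρ.2 (ε / 2) (half_pos hε))
  filter_upwards [hequi] with p hp
  exact (sliceDist_le fun b hb => (min_le_left _ _).trans (hp ⟨b, hsub hb⟩).le).trans_lt
    (half_lt_self hε)

lemma le_chainD_sliceDist {a a' : A} {b : B} (hb : TB.height b ≤ TA.height a ∨ b = b₀)
    (hlt : TA.chainD (TA.sliceDist TB ρ g b₀) a a' < 1) :
    ρ (g a b) (g a' b) ≤ TA.chainD (TA.sliceDist TB ρ g b₀) a a' := by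
  have hmem : b ∈ insert b₀ (TB.S (max (TA.height a) (TA.height a'))) := by
    rcases hb with hb | rfl
    · exact mem_insert_of_mem _ (TB.mem_S_of_height_le (hb.trans (le_max_left _ _)))
    · exact mem_insert _ _
  exact (min_le_iff.1 (min_le_sliceDist _ _ hmem)).resolve_right hlt.not_ge

end UniformTower

section Product

open UniformTower

variable {X Y : Type u} {TX : UniformTower X} {TY : UniformTower Y}

lemma uniformContinuous_mk_dirLim (n m : ℕ) :
    UniformContinuous[@instUniformSpaceProd _ _ (TX.u n) (TY.u m),
      @instUniformSpaceProd _ _ TX.dirLim TY.dirLim]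
      fun q : TX.S n × TY.S m => ((q.1 : X), (q.2 : Y)) := by
  let _ := TX.u n; let _ := TY.u m; let _ := TX.dirLim; let _ := TY.dirLim
  exact ((TX.admissible_dirLim n).comp uniformContinuous_fst).prodMk
    ((TY.admissible_dirLim m).comp uniformContinuous_snd)

lemma uniformContinuous_mk_of_forall {v : UniformSpace (X × Y)}
    (h : ∀ n, UniformContinuous[@instUniformSpaceProd _ _ (TX.u n) (TY.u n), v]
      fun q : TX.S n × TY.S n => ((q.1 : X), (q.2 : Y))) (n m : ℕ) :
    UniformContinuous[@instUniformSpaceProd _ _ (TX.u n) (TY.u m), v]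
      fun q : TX.S n × TY.S m => ((q.1 : X), (q.2 : Y)) := by
  let _ := TX.u n; let _ := TY.u m; let _ := TX.u (max n m); let _ := TY.u (max n m)
  exact (h (max n m)).comp ((TX.uniformContinuous_inclusion (le_max_left n m)).prodMap
    (TY.uniformContinuous_inclusion (le_max_right n m)))

lemma admissible_iff_of_prod {TP : UniformTower (X × Y)}
    (hS : ∀ n, TP.S n = TX.S n ×ˢ TY.S n)
    (hu : ∀ n, TP.u n = UniformSpace.comap
      (fun p : TP.S n => ((⟨p.1.1, (hS n ▸ p.2 : p.1 ∈ TX.S n ×ˢ TY.S n).1⟩ : TX.S n),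
        (⟨p.1.2, (hS n ▸ p.2 : p.1 ∈ TX.S n ×ˢ TY.S n).2⟩ : TY.S n)))
      (@instUniformSpaceProd _ _ (TX.u n) (TY.u n)))
    (v : UniformSpace (X × Y)) :
    TP.Admissible v ↔ ∀ n, UniformContinuous[@instUniformSpaceProd _ _ (TX.u n) (TY.u n), v]
      fun q : TX.S n × TY.S n => ((q.1 : X), (q.2 : Y)) := by
  refine forall_congr' fun n => ?_
  let uXY := @instUniformSpaceProd _ _ (TX.u n) (TY.u n)
  have hψ : UniformContinuous[uXY, TP.u n] fun q : TX.S n × TY.S n =>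
      (⟨((q.1 : X), (q.2 : Y)), hS n ▸ mk_mem_prod q.1.2 q.2.2⟩ : TP.S n) := by
    rw [hu n]
    exact @uniformContinuous_comap' _ _ _ _ _ uXY uXY (@uniformContinuous_id _ uXY)
  have hφ : UniformContinuous[TP.u n, uXY] fun p : TP.S n =>
      ((⟨p.1.1, (hS n ▸ p.2 : p.1 ∈ TX.S n ×ˢ TY.S n).1⟩ : TX.S n),
        (⟨p.1.2, (hS n ▸ p.2 : p.1 ∈ TX.S n ×ˢ TY.S n).2⟩ : TY.S n)) := by
    rw [hu n]
    exact @uniformContinuous_comap _ _ _ uXY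
  exact ⟨fun h => @UniformContinuous.comp _ _ _ uXY (TP.u n) v _ _ h hψ,
    fun h => @UniformContinuous.comp _ _ _ (TP.u n) uXY v _ _ h hφ⟩

variable {ρ : X × Y → X × Y → ℝ}

lemma dist_lt_one_of_limD_sliceDist_lt (hρ : IsPseudometric ρ) {x x₀ : X} {y y₀ : Y}
    (hx : TX.limD (TX.sliceDist TY ρ Prod.mk y₀) x x₀ < 1 / 2)
    (hy : TY.limD (TY.sliceDist TX ρ (flip Prod.mk) x₀) y y₀ < 1 / 2) :
    ρ (x, y) (x₀, y₀) < 1 := by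
  obtain ⟨m, a, rfl, ham, hsumX⟩ := exists_sum_lt_of_limD_lt hx
  obtain ⟨l, b, rfl, hbl, hsumY⟩ := exists_sum_lt_of_limD_lt hy
  have hbound := hρ.le_sum_of_chains TX.height TY.height a b _ _ m l
    (fun i hi y' hy' => le_chainD_sliceDist (hbl ▸ hy')
      (((chainD_le_sum (isPseudometric_sliceDist hρ) hi).trans_lt hsumX).trans one_half_lt_one))
    (fun j hj x' hx' => le_chainD_sliceDist (ham ▸ hx')
      (((chainD_le_sum (isPseudometric_sliceDist hρ) hj).trans_lt hsumY).trans one_half_lt_one))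
  rw [ham, hbl] at hbound
  linarith

lemma setOf_dist_lt_one_mem_nhds {uP : UniformSpace (X × Y)}
    (huP : ∀ n m, UniformContinuous[@instUniformSpaceProd _ _ (TX.u n) (TY.u m), uP]
      fun q : TX.S n × TY.S m => ((q.1 : X), (q.2 : Y)))
    (hρ : IsUniformPseudometric uP ρ) (x₀ : X) (y₀ : Y) :
    {p | ρ (x₀, y₀) p < 1} ∈ @nhds (X × Y)
      (@instTopologicalSpaceProd X Y TX.dirLim.toTopologicalSpace TY.dirLim.toTopologicalSpace)
      (x₀, y₀) := by
  have hdX : ∀ n, IsUniformPseudometric (TX.u n) (TX.sliceDist TY ρ Prod.mk y₀ n) :=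
    isUniformPseudometric_sliceDist hρ huP
  have hdY : ∀ n, IsUniformPseudometric (TY.u n) (TY.sliceDist TX ρ (flip Prod.mk) x₀ n) :=
    isUniformPseudometric_sliceDist hρ fun n m =>
      @UniformContinuous.comp _ _ _ (@instUniformSpaceProd _ _ (TY.u n) (TX.u m))
        (@instUniformSpaceProd _ _ (TX.u m) (TY.u n)) uP _ _ (huP m n)
        (@uniformContinuous_swap _ _ (TY.u n) (TX.u m))
  let _ := TX.dirLim; let _ := TY.dirLim
  have hV := mem_nhds_right x₀
    (TX.setOf_limD_lt_mem_uniformity hdX monotoneSeq_sliceDist one_half_pos)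
  have hW := mem_nhds_right y₀
    (TY.setOf_limD_lt_mem_uniformity hdY monotoneSeq_sliceDist one_half_pos)
  filter_upwards [prod_mem_nhds hV hW] with ⟨x, y⟩ ⟨hx, hy⟩
  rw [hρ.1.2.1]
  exact dist_lt_one_of_limD_sliceDist_lt hρ.1 hx hy

end Product

/-- For towers `(X_n)` and `(Y_n)` of uniform spaces, if `(P_n)` is the tower on `X × Y`
whose `n`-th stage is `X_n × Y_n` with the product uniformity, then the identity map
`u-lim (X_n × Y_n) → (u-lim X_n) × (u-lim Y_n)` is a homeomorphism, i.e. the topology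
of the uniform direct limit of the product tower coincides with the product topology of the
topologies of the uniform direct limits. -/
theorem statement1 {X Y : Type u} (TX : UniformTower X) (TY : UniformTower Y)
    (TP : UniformTower (X × Y))
    (hS : ∀ n, TP.S n = TX.S n ×ˢ TY.S n)
    (hu : ∀ n, TP.u n = UniformSpace.comap
      (fun p : TP.S n =>
        ((⟨p.val.1, (Set.mem_prod.mp (show p.val ∈ TX.S n ×ˢ TY.S n by rw [← hS n]; exact p.property)).1⟩ : TX.S n),
         (⟨p.val.2, (Set.mem_prod.mp (show p.val ∈ TX.S n ×ˢ TY.S n by rw [← hS n]; exact p.property)).2⟩ : TY.S n)))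
      (@instUniformSpaceProd (TX.S n) (TY.S n) (TX.u n) (TY.u n))) :
    TP.dirLim.toTopologicalSpace =
      @instTopologicalSpaceProd X Y TX.dirLim.toTopologicalSpace TY.dirLim.toTopologicalSpace := by
  have hadm := admissible_iff_of_prod hS hu
  refine le_antisymm (UniformSpace.toTopologicalSpace_mono
    (TP.dirLim_le ((hadm _).2 fun n => uniformContinuous_mk_dirLim n n)))
    ((le_iff_nhds _ _).2 fun ⟨x₀, y₀⟩ s hs => ?_)
  obtain ⟨E, hE, hEs⟩ := (@UniformSpace.mem_nhds_iff _ TP.dirLim _ _).1 hs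
  obtain ⟨uP, huP, hEuP⟩ := TP.exists_admissible_of_mem_uniformity hE
  obtain ⟨ρ, hρ, hρE⟩ := exists_isUniformPseudometric_subset uP hEuP
  exact mem_of_superset (setOf_dist_lt_one_mem_nhds
    (uniformContinuous_mk_of_forall ((hadm uP).1 huP)) hρ x₀ y₀) fun q hq => hEs (hρE hq)
end

section
/- For a uniform space X and any tower (Y_n)_{n∈ω} of uniform spaces, the identity map u-lim (X × Y_n) → X × (u-lim Y_n) is a homeomorphism, where each X × Y_n carries the product uniformity and the right-hand side carries the product topology. -/
open Set Filter Topology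

universe u

/-! The identity `u-lim (X × Y_n) → X × u-lim Y_n` is uniformly continuous by the universal
property of the direct limit. For the converse, the product uniformity of `X × Y_n` yields,
for each entourage of `u-lim (X × Y_n)`, an entourage of `Y_n` that works for every horizontal
slice `y ↦ (x, y)` simultaneously; by the universal property, applied to the slices as one map
into `X →ᵤ X × Y`, the slices are uniformly equicontinuous on `u-lim Y_n`. Together with the
continuity of each vertical slice `x ↦ (x, y)`, which lives in a single stage `X × Y_n`, this
gives joint continuity of the identity `X × u-lim Y_n → u-lim (X × Y_n)`. -/

open scoped Uniformity

theorem UniformContinuous.uniformEquicontinuous_curry {α β γ : Type*} [UniformSpace α]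
    [UniformSpace β] [UniformSpace γ] {g : α × β → γ} (hg : UniformContinuous g) :
    UniformEquicontinuous (Function.curry g) := by
  intro U hU
  obtain ⟨A, hA, B, hB, hAB⟩ := entourageProd_subset (hg hU)
  filter_upwards [hB] with ⟨b₁, b₂⟩ hb a
  exact hAB (show ((a, b₁), (a, b₂)) ∈ entourageProd A B from ⟨refl_mem_uniformity hA, hb⟩)

theorem continuousAt_uncurry_of_equicontinuousAt {ι X Z : Type*} [TopologicalSpace ι]
    [TopologicalSpace X] [UniformSpace Z] {F : ι → X → Z} {i₀ : ι} {x₀ : X}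
    (hF : EquicontinuousAt F x₀) (hi : ContinuousAt (F · x₀) i₀) :
    ContinuousAt (Function.uncurry F) (i₀, x₀) := by
  rw [Uniform.continuousAt_iff'_right]
  intro U hU
  obtain ⟨V, hV, hVU⟩ := comp_mem_uniformity_sets hU
  have hi' : ∀ᶠ i in 𝓝 i₀, (F i₀ x₀, F i x₀) ∈ V := Uniform.continuousAt_iff'_right.mp hi hV
  rw [nhds_prod_eq, Filter.mem_map]
  filter_upwards [hi'.prod_mk (hF V hV)] with ⟨i, x⟩ ⟨hix, hxx⟩ using hVU ⟨F i x₀, hix, hxx i⟩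

namespace UniformTower

variable {Y : Type u} (T : UniformTower Y)

theorem uniformContinuous_val_dirLim (n : ℕ) :
    UniformContinuous[T.u n, T.dirLim] (Subtype.val : T.S n → Y) :=
  uniformContinuous_sInf_rng.mpr fun _ hu => hu n

theorem uniformContinuous_dirLim_iff {Z : Type*} [UniformSpace Z] {f : Y → Z} :
    UniformContinuous[T.dirLim, _] f ↔
      ∀ n, UniformContinuous[T.u n, _] (f ∘ (Subtype.val : T.S n → Y)) := by
  refine ⟨fun hf n => ?_, fun hf => ?_⟩
  · exact @UniformContinuous.comp _ _ _ (T.u n) T.dirLim _ _ _ hf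
      (T.uniformContinuous_val_dirLim n)
  · rw [uniformContinuous_iff_le_comap]
    exact sInf_le fun n => uniformContinuous_comap' (u := T.u n) (hf n)

theorem uniformEquicontinuous_dirLim_iff {ι Z : Type*} [UniformSpace Z] {F : ι → Y → Z} :
    @UniformEquicontinuous ι Z Y _ T.dirLim F ↔
      ∀ n, @UniformEquicontinuous ι Z (T.S n) _ (T.u n) fun i y => F i y := by
  simp only [uniformEquicontinuous_iff_uniformContinuous]
  exact T.uniformContinuous_dirLim_iff

theorem continuous_prod_dirLim_of_uniformContinuous_stages {X Z : Type*}
    [UniformSpace X] [UniformSpace Z] {f : X × Y → Z}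
    (hf : ∀ n, UniformContinuous[@instUniformSpaceProd X (T.S n) _ (T.u n), _]
      fun p : X × T.S n => f (p.1, p.2)) :
    Continuous[@instTopologicalSpaceProd X Y _ T.dirLim.toTopologicalSpace, _] f := by
  let := T.dirLim
  have hF : UniformEquicontinuous (Function.curry f) :=
    T.uniformEquicontinuous_dirLim_iff.mpr fun n =>
      @UniformContinuous.uniformEquicontinuous_curry _ _ _ _ (T.u n) _ _ (hf n)
  refine continuous_iff_continuousAt.mpr fun ⟨x, y⟩ => ?_
  let := T.u (T.height y)
  have hx : ContinuousAt (fun x' => f (x', y)) x :=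
    ((hf _).comp (uniformContinuous_id.prodMk
      (uniformContinuous_const (b := (⟨y, T.mem_S_height y⟩ : T.S _))))).continuous.continuousAt
  exact continuousAt_uncurry_of_equicontinuousAt (hF.equicontinuous y) hx

end UniformTower

/-- For a uniform space `X` and a tower `(Y_n)` of uniform spaces, if `(P_n)` is the tower on
`X × Y` whose `n`-th stage is `X × Y_n` with the product uniformity, then the identity map
`u-lim (X × Y_n) → X × (u-lim Y_n)` is a homeomorphism, i.e. the topology of the uniform
direct limit of the tower `(X × Y_n)` coincides with the product topology of the topology of
`X` and the topology of `u-lim Y_n`. -/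
theorem statement2 {X Y : Type u} (uX : UniformSpace X) (TY : UniformTower Y)
    (TP : UniformTower (X × Y))
    (hS : ∀ n, TP.S n = (Set.univ : Set X) ×ˢ TY.S n)
    (hu : ∀ n, TP.u n = UniformSpace.comap
      (fun p : TP.S n =>
        (p.val.1,
         (⟨p.val.2, (Set.mem_prod.mp
            (show p.val ∈ (Set.univ : Set X) ×ˢ TY.S n by
              rw [← hS n]; exact p.property)).2⟩ : TY.S n)))
      (@instUniformSpaceProd X (TY.S n) uX (TY.u n))) :
    TP.dirLim.toTopologicalSpace =
      @instTopologicalSpaceProd X Y uX.toTopologicalSpace TY.dirLim.toTopologicalSpace := by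
  have mem_stage : ∀ n (p : X × TY.S n), (p.1, p.2.val) ∈ TP.S n := fun n p => by
    rw [hS n]
    exact ⟨mem_univ _, p.2.2⟩
  have stage_to_prod : ∀ n, UniformContinuous[TP.u n,
      @instUniformSpaceProd X Y uX TY.dirLim] (Subtype.val : TP.S n → X × Y) := fun n => by
    rw [hu n]
    let := uX; let := TY.u n; let := TY.dirLim
    exact @UniformContinuous.comp _ _ _ (UniformSpace.comap _ _) _ _ (Prod.map id Subtype.val) _
      (uniformContinuous_id.prodMap (TY.uniformContinuous_val_dirLim n)) uniformContinuous_comap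
  have prod_to_stage : ∀ n, UniformContinuous[@instUniformSpaceProd X (TY.S n) uX (TY.u n),
      TP.dirLim] fun p : X × TY.S n => (p.1, p.2.val) := fun n => by
    have into_stage : UniformContinuous[@instUniformSpaceProd X (TY.S n) uX (TY.u n), TP.u n]
        (fun p => ⟨_, mem_stage n p⟩ : X × TY.S n → TP.S n) := by
      rw [hu n]
      let := uX; let := TY.u n
      exact uniformContinuous_comap' uniformContinuous_id
    exact @UniformContinuous.comp _ _ _ (@instUniformSpaceProd X (TY.S n) uX (TY.u n)) (TP.u n)
      TP.dirLim _ _ (TP.uniformContinuous_val_dirLim n) into_stage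
  refine le_antisymm (UniformSpace.toTopologicalSpace_mono
    (show TP.dirLim ≤ _ from sInf_le stage_to_prod)) ?_
  exact continuous_id_iff_le.mp
    (@UniformTower.continuous_prod_dirLim_of_uniformContinuous_stages _ TY _ _ uX TP.dirLim id
      prod_to_stage)
end

section
/- For any tower (X_n)_{n∈ω} of uniform spaces and any sequence (U_n)_{n∈ω} such that U_n is an entourage of X_n for every n, there exists a monotone sequence (d_n)_{n∈ω} of uniform pseudometrics (d_n a uniform pseudometric on X_n) such that {(x,y) ∈ X_n² : d_n(x,y) < 1} ⊆ U_n for every n ∈ ω. -/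
open Set Filter Topology

universe u

/-!
Every entourage `W` contains the unit ball `{ρ < 1}` of a uniform pseudometric `ρ ≤ 1`: a chain
of symmetric entourages with `V (k+1) ○ V (k+1) ⊆ V k ⊆ W` generates a coarser, countably
generated uniformity, which is pseudometrizable.

Monotonicity comes from a domination step. If `d ≤ 1` is a uniform pseudometric for the subspace
uniformity induced by `ι : A → Y`, choose uniform pseudometrics `ρ k ≤ 1` on `Y` whose unit balls
pull back into `{d < 2⁻ᵏ}`; then `d ≤ sup_k 2¹⁻ᵏ ρ k` along `ι`, and the supremum is uniform
because its terms are uniformly small in the tail. The sequence is built recursively by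
`d (n+1) = max (e (n+1)) g`, where `{e (n+1) < 1} ⊆ U (n+1)` and `g` dominates `d n`.
-/

open Uniformity
open scoped SetRel

theorem exists_seq_of_forall_exists_succ {β : ℕ → Sort*} {P : ∀ n, β n → Prop}
    {R : ∀ n, β n → β (n + 1) → Prop} (h0 : ∃ b, P 0 b)
    (hs : ∀ n b, P n b → ∃ b', P (n + 1) b' ∧ R n b b') :
    ∃ f : ∀ n, β n, ∀ n, P n (f n) ∧ R n (f n) (f (n + 1)) := by
  obtain ⟨b₀, hb₀⟩ := h0
  have : ∀ n (b : {b // P n b}), ∃ b' : {b' // P (n + 1) b'}, R n b b' := fun n b =>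
    let ⟨b', hP, hR⟩ := hs n b b.2
    ⟨⟨b', hP⟩, hR⟩
  choose next hnext using this
  let f : ∀ n, {b // P n b} := fun n =>
    Nat.rec (motive := fun n => {b // P n b}) ⟨b₀, hb₀⟩ next n
  exact ⟨fun n => f n, fun n => ⟨(f n).2, hnext n (f n)⟩⟩

namespace IsPseudometric

variable {α : Type*} {d e : α → α → ℝ}

theorem nonneg_s8 (hd : IsPseudometric d) (x y : α) : 0 ≤ d x y := by
  have := hd.2.2 x y x
  rw [hd.1 x, hd.2.1 y x] at this
  linarith

theorem const_mul (hd : IsPseudometric d) {a : ℝ} (ha : 0 ≤ a) :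
    IsPseudometric fun x y => a * d x y :=
  ⟨fun x => by simp [hd.1 x], fun x y => by simp only [hd.2.1 x y], fun x y z => by
    simp only [← mul_add]; exact mul_le_mul_of_nonneg_left (hd.2.2 x y z) ha⟩

theorem min_const (hd : IsPseudometric d) {c : ℝ} (hc : 0 ≤ c) :
    IsPseudometric fun x y => min c (d x y) := by
  refine ⟨fun x => by simp [hd.1 x, hc], fun x y => by simp only [hd.2.1 x y], fun x y z => ?_⟩
  have := hd.2.2 x y z
  have := hd.nonneg_s8 x y
  have := hd.nonneg_s8 y z
  grind

theorem max (hd : IsPseudometric d) (he : IsPseudometric e) :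
    IsPseudometric fun x y => max (d x y) (e x y) :=
  ⟨fun x => by simp [hd.1 x, he.1 x], fun x y => by simp only [hd.2.1 x y, he.2.1 x y],
    fun x y z => max_le ((hd.2.2 x y z).trans (add_le_add (le_max_left _ _) (le_max_left _ _)))
      ((he.2.2 x y z).trans (add_le_add (le_max_right _ _) (le_max_right _ _)))⟩

theorem iSup {G : ℕ → α → α → ℝ} (hG : ∀ k, IsPseudometric (G k))
    (hbdd : ∀ x y, BddAbove (Set.range fun k => G k x y)) :
    IsPseudometric fun x y => ⨆ k, G k x y :=
  ⟨fun x => by simp [(hG _).1 x], fun x y => by simp only [(hG _).2.1 x y],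
    fun x y z => ciSup_le fun k => ((hG k).2.2 x y z).trans
      (add_le_add (le_ciSup (hbdd x y) k) (le_ciSup (hbdd y z) k))⟩

end IsPseudometric

namespace IsUniformPseudometric

variable {α : Type*} {u : UniformSpace α} {d e : α → α → ℝ}

theorem of_le (hd : IsUniformPseudometric u d) (he : IsPseudometric e)
    (hed : ∀ x y, e x y ≤ d x y) : IsUniformPseudometric u e :=
  ⟨he, fun ε hε => mem_of_superset (hd.2 ε hε) fun _ hp => (hed _ _).trans_lt hp⟩

theorem const_mul (hd : IsUniformPseudometric u d) {a : ℝ} (ha : 0 < a) :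
    IsUniformPseudometric u fun x y => a * d x y :=
  ⟨hd.1.const_mul ha.le, fun ε hε => mem_of_superset (hd.2 (ε / a) (div_pos hε ha))
    fun _ hp => (lt_div_iff₀' ha).1 hp⟩

theorem min_const (hd : IsUniformPseudometric u d) {c : ℝ} (hc : 0 ≤ c) :
    IsUniformPseudometric u fun x y => min c (d x y) :=
  hd.of_le (hd.1.min_const hc) fun _ _ => min_le_right _ _

theorem max (hd : IsUniformPseudometric u d) (he : IsUniformPseudometric u e) :
    IsUniformPseudometric u fun x y => max (d x y) (e x y) :=
  ⟨hd.1.max he.1, fun ε hε =>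
    mem_of_superset (inter_mem (hd.2 ε hε) (he.2 ε hε)) fun p hp =>
      show Max.max (d p.1 p.2) (e p.1 p.2) < ε from max_lt hp.1 hp.2⟩

theorem iSup {G : ℕ → α → α → ℝ} {c : ℕ → ℝ} (hG : ∀ k, IsUniformPseudometric u (G k))
    (hc : Tendsto c atTop (𝓝 0)) (hGc : ∀ k x y, G k x y ≤ c k) :
    IsUniformPseudometric u fun x y => ⨆ k, G k x y := by
  have hbdd x y : BddAbove (Set.range fun k => G k x y) :=
    hc.bddAbove_range.range_mono c (hGc · x y)
  refine ⟨IsPseudometric.iSup (fun k => (hG k).1) hbdd, fun ε hε => ?_⟩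
  obtain ⟨K, hK⟩ := eventually_atTop.1 (hc.eventually (gt_mem_nhds (half_pos hε)))
  have hhead : ∀ᶠ p in 𝓤[u], ∀ k ∈ Set.Iio K, G k p.1 p.2 < ε / 2 :=
    (eventually_all_finite (Set.finite_Iio K)).2 fun k _ => (hG k).2 _ (half_pos hε)
  filter_upwards [hhead] with p hp
  refine (ciSup_le fun k => ?_).trans_lt (half_lt_self hε)
  rcases lt_or_ge k K with hk | hk
  · exact (hp k hk).le
  · exact (hGc k _ _).trans (hK k hk).le

end IsUniformPseudometric

theorem exists_countablyGenerated_uniformity_ge_of_mem {α : Type*} (u : UniformSpace α)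
    {W : Set (α × α)} (hW : W ∈ 𝓤[u]) :
    ∃ v : UniformSpace α, 𝓤[u] ≤ 𝓤[v] ∧ (𝓤[v]).IsCountablyGenerated ∧ W ∈ 𝓤[v] := by
  let _ := u
  obtain ⟨V, hV⟩ := exists_seq_of_forall_exists_succ (β := fun _ => SetRel α α)
    (P := fun _ V => V ∈ 𝓤 α ∧ V.IsSymm ∧ V ⊆ W) (R := fun _ V V' => V' ○ V' ⊆ V)
    ⟨_, symmetrize_mem_uniformity hW, inferInstance, SetRel.symmetrize_subset_self⟩
    fun _ V ⟨hV, _, hVW⟩ =>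
      let ⟨t, ht, htsymm, htV⟩ := comp_symm_mem_uniformity_sets hV
      ⟨t, ⟨ht, htsymm, ((subset_comp_self_of_mem_uniformity ht).trans htV).trans hVW⟩, htV⟩
  have hanti : Antitone V := antitone_nat_of_succ_le fun k =>
    (subset_comp_self_of_mem_uniformity (hV (k + 1)).1.1).trans (hV k).2
  have hbasis : (⨅ k, 𝓟 (V k)).HasBasis (fun _ => True) V :=
    hasBasis_iInf_principal hanti.directed_ge
  let v : UniformSpace α := .ofCore <| .mk' (⨅ k, 𝓟 (V k))
    (fun _ hr x => let ⟨k, _, hk⟩ := hbasis.mem_iff.1 hr; hk (refl_mem_uniformity (hV k).1.1))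
    (fun _ hr => let ⟨k, _, hk⟩ := hbasis.mem_iff.1 hr
      have := (hV k).1.2.1
      hbasis.mem_iff.2 ⟨k, trivial, fun _ hp => hk (SetRel.symm _ hp)⟩)
    (fun _ hr => let ⟨k, _, hk⟩ := hbasis.mem_iff.1 hr
      ⟨V (k + 1), hbasis.mem_of_mem trivial, (hV k).2.trans hk⟩)
  exact ⟨v, le_iInf fun k => le_principal_iff.2 (hV k).1.1, hbasis.isCountablyGenerated,
    mem_of_superset (hbasis.mem_of_mem (i := 0) trivial) (hV 0).1.2.2⟩

theorem exists_isUniformPseudometric_le_one_subset {α : Type*} (u : UniformSpace α)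
    {W : Set (α × α)} (hW : W ∈ 𝓤[u]) :
    ∃ ρ : α → α → ℝ, IsUniformPseudometric u ρ ∧ (∀ x y, ρ x y ≤ 1) ∧
      {p : α × α | ρ p.1 p.2 < 1} ⊆ W := by
  obtain ⟨v, huv, hv, hWv⟩ := exists_countablyGenerated_uniformity_ge_of_mem u hW
  obtain ⟨I, rfl⟩ := @UniformSpace.metrizable_uniformity α v hv
  let _ := I
  obtain ⟨δ, hδ, hδW⟩ := Metric.mem_uniformity_dist.1 hWv
  have hdist : IsUniformPseudometric u dist :=
    ⟨⟨dist_self, dist_comm, dist_triangle⟩, fun ε hε => huv (Metric.dist_mem_uniformity hε)⟩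
  refine ⟨fun x y => min 1 (δ⁻¹ * dist x y),
    (hdist.const_mul (inv_pos.2 hδ)).min_const zero_le_one, fun _ _ => min_le_left _ _,
    fun p hp => hδW ?_⟩
  have hp' : δ⁻¹ * dist p.1 p.2 < 1 :=
    (min_lt_iff.1 (show min 1 (δ⁻¹ * dist p.1 p.2) < 1 from hp)).resolve_left (lt_irrefl 1)
  rwa [inv_mul_lt_iff₀ hδ, mul_one] at hp'

theorem IsUniformPseudometric.exists_dominating_of_comap {A Y : Type*} {u : UniformSpace Y}
    {ι : A → Y} {d : A → A → ℝ} (hd : IsUniformPseudometric (u.comap ι) d)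
    (hd1 : ∀ x y, d x y ≤ 1) :
    ∃ g : Y → Y → ℝ, IsUniformPseudometric u g ∧ (∀ x y, g x y ≤ 1) ∧
      ∀ x y, d x y ≤ g (ι x) (ι y) := by
  have hW (k : ℕ) : ∃ W ∈ 𝓤[u], ∀ x y, (ι x, ι y) ∈ W → d x y < (1 / 2) ^ k := by
    have := hd.2 _ (pow_pos one_half_pos k)
    rw [uniformity_comap] at this
    obtain ⟨W, hW, hWd⟩ := mem_comap.1 this
    exact ⟨W, hW, fun x y h => hWd (show (x, y) ∈ Prod.map ι ι ⁻¹' W from h)⟩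
  choose W hWu hWd using hW
  choose ρ hρ hρ1 hρW using fun k => exists_isUniformPseudometric_le_one_subset u (hWu k)
  set G : ℕ → Y → Y → ℝ := fun k x y => 2 * (1 / 2) ^ k * ρ k x y
  have hGc k x y : G k x y ≤ 2 * (1 / 2) ^ k :=
    mul_le_of_le_one_right (by positivity) (hρ1 k x y)
  have hc : Tendsto (fun k : ℕ => 2 * (1 / 2 : ℝ) ^ k) atTop (𝓝 0) := by
    simpa using (tendsto_pow_atTop_nhds_zero_of_lt_one (by norm_num : (0 : ℝ) ≤ 1 / 2)
      (by norm_num)).const_mul 2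
  have hsup := IsUniformPseudometric.iSup (fun k => (hρ k).const_mul (by positivity)) hc hGc
  refine ⟨fun x y => min 1 (⨆ k, G k x y), hsup.min_const zero_le_one,
    fun _ _ => min_le_left _ _, fun x y => le_min (hd1 x y) ?_⟩
  rcases (hd.1.nonneg_s8 x y).eq_or_lt with h0 | hpos
  · rw [← h0]; exact hsup.1.nonneg_s8 _ _
  obtain ⟨n, hlt, hle⟩ := exists_nat_pow_near_of_lt_one hpos (hd1 x y) one_half_pos one_half_lt_one
  have hρ_one : 1 ≤ ρ (n + 1) (ι x) (ι y) :=
    not_lt.1 fun h => lt_asymm (hWd _ x y (hρW _ h)) hlt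
  calc d x y ≤ (1 / 2) ^ n := hle
    _ = 2 * (1 / 2) ^ (n + 1) * 1 := by ring
    _ ≤ G (n + 1) (ι x) (ι y) := mul_le_mul_of_nonneg_left hρ_one (by positivity)
    _ ≤ ⨆ k, G k (ι x) (ι y) :=
      le_ciSup (hc.bddAbove_range.range_mono _ (hGc · _ _)) (n + 1)

/-- For any tower `(X_n)` of uniform spaces and any sequence `(U_n)` of entourages
(`U_n` an entourage of `X_n`), there exists a monotone sequence `(d_n)` of uniform
pseudometrics with `{d_n < 1} ⊆ U_n` for every `n`. -/
theorem statement8 {X : Type u} (T : UniformTower X)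
    (U : (n : ℕ) → Set (T.S n × T.S n))
    (hU : ∀ n, U n ∈ @uniformity _ (T.u n)) :
    ∃ d : (n : ℕ) → T.S n → T.S n → ℝ,
      (∀ n, IsUniformPseudometric (T.u n) (d n)) ∧ T.MonotoneSeq d ∧
      ∀ n, {p : T.S n × T.S n | d n p.1 p.2 < 1} ⊆ U n := by
  have hbase n := exists_isUniformPseudometric_le_one_subset (T.u n) (hU n)
  obtain ⟨d, hd⟩ := exists_seq_of_forall_exists_succ (β := fun n => T.S n → T.S n → ℝ)
    (P := fun n e => IsUniformPseudometric (T.u n) e ∧ (∀ x y, e x y ≤ 1) ∧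
      {p : T.S n × T.S n | e p.1 p.2 < 1} ⊆ U n)
    (R := fun n e e' => ∀ x y, e x y ≤
      e' (Set.inclusion (T.mono (Nat.le_succ n)) x) (Set.inclusion (T.mono (Nat.le_succ n)) y))
    (hbase 0) fun n e ⟨he, he1, _⟩ => by
      rw [T.compat n] at he
      obtain ⟨g, hg, hg1, hdg⟩ := he.exists_dominating_of_comap he1
      obtain ⟨e', he', he'1, he'U⟩ := hbase (n + 1)
      exact ⟨fun x y => max (e' x y) (g x y),
        ⟨he'.max hg, fun x y => max_le (he'1 x y) (hg1 x y),
          fun p hp => he'U (show e' p.1 p.2 < 1 from (le_max_left _ _).trans_lt hp)⟩,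
        fun x y => (hdg x y).trans (le_max_right _ _)⟩
  exact ⟨d, fun n => (hd n).1.1, fun n => (hd n).2, fun n => (hd n).1.2.2⟩
end
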